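/- arXiv:math/9810018 — 4 statements merged into one kernel-verified Lean document; each statement's English description precedes it below -/
import Mathlib

section
/- The q-trinomial coefficient satisfies the symmetry [L, b; a]_2 = q^{a(a−b)} · [L, b−2a; −a]_2 for all integers L ≥ 0 and all integers a, b. -/
open Finset

/-- The variable `q`, realized as the generator of the field of rational functions over `ℚ`. -/
noncomputable def qq : RatFunc ℚ := RatFunc.X

/-- `(x)_n = ∏_{j=1}^n (1 - x^j)`. -/
noncomputable def qPoch (x : RatFunc ℚ) (n : ℕ) : RatFunc ℚ :=
  ∏ j ∈ Finset.range n, (1 - x ^ (j + 1))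

/-- Gaussian binomial coefficient `[n choose k]_x`, zero unless `0 ≤ k ≤ n`. -/
noncomputable def qBin (x : RatFunc ℚ) (n k : ℤ) : RatFunc ℚ :=
  if 0 ≤ k ∧ k ≤ n then qPoch x n.toNat / (qPoch x k.toNat * qPoch x (n - k).toNat) else 0

/-- The `q`-trinomial coefficient `[L, b; a]_2` in base `x`. -/
noncomputable def qTri (x : RatFunc ℚ) (L : ℕ) (b a : ℤ) : RatFunc ℚ :=
  ∑ k ∈ Finset.range (L + 1),
    x ^ ((k : ℤ) * (k + b)) * qBin x (L : ℤ) (k : ℤ) * qBin x ((L : ℤ) - k) ((k : ℤ) + a)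

/-- The `q`-trinomial `T_n(L, a)`, written in terms of `s = q^{1/2}` (so the base is `s^2`):
`T_n(L,a) = ∑ s^{r(r-n)} (s²)_L / ((s²)_{(L-a-r)/2} (s²)_{(L+a-r)/2} (s²)_r)`,
the sum over `r ≥ 0` with `L - a - r` even and `r ≤ L - |a|`; zero for `|a| > L`. -/
noncomputable def qT (s : RatFunc ℚ) (n : ℤ) (L : ℕ) (a : ℤ) : RatFunc ℚ :=
  ∑ r ∈ Finset.range (L + 1),
    if Even ((L : ℤ) - a - r) ∧ (r : ℤ) ≤ (L : ℤ) - |a| then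
      s ^ ((r : ℤ) * ((r : ℤ) - n)) * qPoch (s ^ 2) L /
        (qPoch (s ^ 2) (((L : ℤ) - a - r) / 2).toNat *
          qPoch (s ^ 2) (((L : ℤ) + a - r) / 2).toNat * qPoch (s ^ 2) r)
    else 0

/-- The Cartan matrix of the Lie algebra `A_n`. -/
def cartanA (n : ℕ) (i j : Fin n) : ℤ :=
  if i = j then 2 else if |(i : ℤ) - (j : ℤ)| = 1 then -1 else 0

lemma qq_ne_zero : qq ≠ 0 := RatFunc.X_ne_zero

lemma qq_pow_ne_one (m : ℕ) : qq ^ (m+1) ≠ 1 := by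
  intro h
  have h0 : (RatFunc.X : RatFunc ℚ) ^ (m+1) = algebraMap (Polynomial ℚ) _ (Polynomial.X ^ (m+1)) := by
    simp
  rw [qq, h0] at h
  have h2 : (Polynomial.X ^ (m+1) : Polynomial ℚ) = 1 :=
    RatFunc.algebraMap_injective ℚ (by rw [h]; simp)
  simpa using congrArg Polynomial.natDegree h2

lemma qPoch_ne_zero (n : ℕ) : qPoch qq n ≠ 0 := by
  unfold qPoch
  apply Finset.prod_ne_zero_iff.2
  intro j _ h
  exact qq_pow_ne_one j (by linear_combination -h)

lemma qBin_swap (L : ℕ) (a k : ℤ) :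
    qBin qq L k * qBin qq ((L:ℤ) - k) (k + a)
      = qBin qq L (k+a) * qBin qq ((L:ℤ) - (k+a)) k := by
  by_cases h : 0 ≤ k ∧ 0 ≤ k + a ∧ k + (k+a) ≤ (L:ℤ)
  · unfold qBin
    rw [if_pos ⟨h.1, by omega⟩, if_pos ⟨h.2.1, by omega⟩, if_pos ⟨h.2.1, by omega⟩,
      if_pos ⟨h.1, by omega⟩]
    have e1 : (L:ℤ) - k - (k+a) = (L:ℤ) - (k+a) - k := by ring
    rw [e1]
    field_simp [qPoch_ne_zero]
  · unfold qBin
    split_ifs <;> simp <;> omega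

lemma key (L : ℕ) (a b k : ℤ) :
    qq ^ (k*(k+b)) * qBin qq (L:ℤ) k * qBin qq ((L:ℤ) - k) (k + a)
      = qq ^ (a*(a-b)) * (qq ^ ((k+a)*((k+a)+(b-2*a))) * qBin qq (L:ℤ) (k+a)
          * qBin qq ((L:ℤ) - (k+a)) ((k+a) + -a)) := by
  have e : (k+a) + -a = k := by ring
  rw [e]
  have hpow : qq ^ (a*(a-b)) * qq ^ ((k+a)*((k+a)+(b-2*a))) = qq ^ (k*(k+b)) := by
    rw [← zpow_add₀ qq_ne_zero]
    ring_nf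
  rw [mul_assoc, qBin_swap, ← hpow]
  ring

lemma sum_range_int (L : ℕ) (f : ℤ → RatFunc ℚ) :
    ∑ k ∈ Finset.range (L+1), f (k:ℤ) = ∑ k ∈ Finset.Icc (0:ℤ) (L:ℤ), f k := by
  rw [← Finset.sum_image (f := f) (s := Finset.range (L+1)) (g := fun n : ℕ => (n:ℤ))
    (by intro x _ y _ h; simpa using h)]
  congr 1
  ext x
  simp only [Finset.mem_image, Finset.mem_range, Finset.mem_Icc]
  constructor
  · rintro ⟨n, hn, rfl⟩; omega
  · intro hx; exact ⟨x.toNat, by omega, by omega⟩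

lemma zero_off (L : ℕ) (c a : ℤ) (k : ℤ) (h : ¬ (0 ≤ k ∧ k ≤ (L:ℤ))) :
    qq ^ (k*(k+c)) * qBin qq (L:ℤ) k * qBin qq ((L:ℤ) - k) (k + a) = 0 := by
  unfold qBin
  rw [if_neg h]
  ring

lemma extend (L : ℕ) (c a lo hi : ℤ) (hlo : lo ≤ 0) (hhi : (L:ℤ) ≤ hi) :
    ∑ k ∈ Finset.Icc (0:ℤ) (L:ℤ), qq ^ (k*(k+c)) * qBin qq (L:ℤ) k * qBin qq ((L:ℤ) - k) (k + a)
    = ∑ k ∈ Finset.Icc lo hi, qq ^ (k*(k+c)) * qBin qq (L:ℤ) k * qBin qq ((L:ℤ) - k) (k + a) := by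
  apply Finset.sum_subset
  · intro x hx
    simp only [Finset.mem_Icc] at *
    omega
  · intro x _ hx
    apply zero_off
    simp only [Finset.mem_Icc] at hx
    omega

lemma shift (lo hi a : ℤ) (f : ℤ → RatFunc ℚ) :
    ∑ j ∈ Finset.Icc (lo + a) (hi + a), f j = ∑ k ∈ Finset.Icc lo hi, f (k + a) := by
  rw [← Finset.map_add_right_Icc lo hi a, Finset.sum_map]
  rfl

theorem stmt2 (L : ℕ) (a b : ℤ) :
    qTri qq L b a = qq ^ (a * (a - b)) * qTri qq L (b - 2 * a) (-a) := by
  unfold qTri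
  rw [sum_range_int L (fun k => qq ^ (k*(k+b)) * qBin qq (L:ℤ) k * qBin qq ((L:ℤ) - k) (k + a)),
      sum_range_int L (fun k => qq ^ (k*(k+(b - 2*a))) * qBin qq (L:ℤ) k * qBin qq ((L:ℤ) - k) (k + -a))]
  rw [extend L b a (min 0 (-a)) (max (L:ℤ) ((L:ℤ) - a)) (by omega) (by omega)]
  rw [extend L (b-2*a) (-a) (min 0 (-a) + a) (max (L:ℤ) ((L:ℤ) - a) + a) (by omega) (by omega)]
  rw [shift (min 0 (-a)) (max (L:ℤ) ((L:ℤ) - a)) a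
    (fun j => qq ^ (j*(j+(b - 2*a))) * qBin qq (L:ℤ) j * qBin qq ((L:ℤ) - j) (j + -a))]
  rw [Finset.mul_sum]
  apply Finset.sum_congr rfl
  intro k _
  exact key L a b k
end

section
/- For all integers L ≥ 0 and all integers a with |a| ≤ L, the q-trinomial T_0 satisfies T_0(L,a) = ∑_{k=0}^{L} (−1)^{L−k} q^{binom(L−k,2) + (a²−L²)/2} [L choose k]_q [2k choose k−a]_q. -/
open Finset

/-!
Write `x = s²`. Expanding `[2k, k - a]_x = ∑ⱼ x^(j(j+a)) [k, j]_x [k, j + a]_x` by the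
`q`-Vandermonde identity and exchanging the sums, the inner sum over `k` collapses: the rule
`[L, k][k, j + a] = [L, j + a][L - j - a, k - j - a]` and a `q`-analogue of
`∑ₜ (-1)ᵗ C(M, t) C(L - t, j) = C(L - M, j - M)` turn it into
`x^((L - j - a)(L - j)) [L, j + a]_x [j + a, 2j + a - L]_x`. With `r = 2j + a - L` this is the
`r`-th summand of `T_0(L, a)`, the powers of `s` combining to `s^(r²)`.
-/

lemma qPoch_zero (x : RatFunc ℚ) : qPoch x 0 = 1 := prod_range_zero _

lemma qPoch_succ (x : RatFunc ℚ) (n : ℕ) : qPoch x (n + 1) = qPoch x n * (1 - x ^ (n + 1)) :=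
  prod_range_succ _ _

lemma zpow_mul_sub_one_eq_pow_choose_two {G : Type*} [DivInvMonoid G] (s : G) (n : ℕ) :
    s ^ ((n : ℤ) * (n - 1)) = (s ^ 2) ^ n.choose 2 := by
  have h : ((n.choose 2 * 2 : ℕ) : ℤ) = n * (n - 1) := by
    rw [Nat.choose_two_right, Nat.div_mul_cancel (Nat.even_mul_pred_self n).two_dvd]
    rcases n with _ | n <;> simp
  rw [← pow_mul, mul_comm 2, ← h, zpow_natCast]

section QBinomial

variable {x : RatFunc ℚ}

lemma qBin_eq_zero {n k : ℤ} (h : ¬(0 ≤ k ∧ k ≤ n)) : qBin x n k = 0 := if_neg h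

lemma qBin_natCast_add (i j : ℕ) :
    qBin x ((i : ℤ) + j) i = qPoch x (i + j) / (qPoch x i * qPoch x j) := by
  rw [qBin, if_pos (by omega)]
  congr 3
  omega

lemma qBin_symm (n k : ℤ) : qBin x n k = qBin x n (n - k) := by
  by_cases h : 0 ≤ k ∧ k ≤ n
  · rw [qBin, qBin, if_pos h, if_pos (by omega), sub_sub_cancel, mul_comm]
  · rw [qBin_eq_zero h, qBin_eq_zero (by omega)]

lemma qBin_zero_right (hx : ∀ m, qPoch x m ≠ 0) {n : ℤ} (hn : 0 ≤ n) : qBin x n 0 = 1 := by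
  lift n to ℕ using hn
  have h := qBin_natCast_add (x := x) 0 n
  rw [Nat.cast_zero, zero_add, zero_add] at h
  rw [h, qPoch_zero, one_mul, div_self (hx n)]

lemma qBin_self (hx : ∀ m, qPoch x m ≠ 0) {n : ℤ} (hn : 0 ≤ n) : qBin x n n = 1 := by
  rw [qBin_symm, sub_self, qBin_zero_right hx hn]

lemma qBin_zero_left (hx : ∀ m, qPoch x m ≠ 0) (k : ℤ) :
    qBin x 0 k = if k = 0 then 1 else 0 := by
  split_ifs with hk
  · rw [hk, qBin_zero_right hx le_rfl]
  · exact qBin_eq_zero (by omega)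

lemma qPoch_div_pascal (hx : ∀ m, qPoch x m ≠ 0) (i m : ℕ) :
    qPoch x (i + m + 2) / (qPoch x (i + 1) * qPoch x (m + 1)) =
      x ^ (m + 1) * (qPoch x (i + m + 1) / (qPoch x i * qPoch x (m + 1))) +
        qPoch x (i + m + 1) / (qPoch x (i + 1) * qPoch x m) := by
  have hi := hx (i + 1)
  have hm := hx (m + 1)
  have := hx (i + m + 1)
  rw [qPoch_succ] at hi hm
  have := right_ne_zero_of_mul hi
  have := right_ne_zero_of_mul hm
  rw [qPoch_succ x (i + m + 1), qPoch_succ x i, qPoch_succ x m]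
  field_simp
  ring

lemma qBin_succ (hx : ∀ m, qPoch x m ≠ 0) (n : ℕ) (k : ℤ) :
    qBin x ((n : ℤ) + 1) k = x ^ ((n : ℤ) + 1 - k) * qBin x n (k - 1) + qBin x n k := by
  rcases lt_trichotomy k 0 with hk | rfl | hk
  · rw [qBin_eq_zero (by omega), qBin_eq_zero (by omega), qBin_eq_zero (by omega)]
    simp
  · rw [qBin_zero_right hx (by omega), qBin_zero_right hx (by omega), qBin_eq_zero (by omega)]
    simp
  rcases lt_trichotomy k ((n : ℤ) + 1) with hkn | rfl | hkn
  · obtain ⟨i, rfl⟩ : ∃ i : ℕ, k = i + 1 := ⟨(k - 1).toNat, by omega⟩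
    obtain ⟨m, rfl⟩ : ∃ m : ℕ, n = i + m + 1 := ⟨n - i - 1, by omega⟩
    convert qPoch_div_pascal hx i m using 2
    · convert qBin_natCast_add (i + 1) (m + 1) using 2 <;> push_cast <;> ring_nf
    · rw [show ((i + m + 1 : ℕ) : ℤ) + 1 - (i + 1) = ((m + 1 : ℕ) : ℤ) by push_cast; ring,
        zpow_natCast]
      congr 1
      convert qBin_natCast_add i (m + 1) using 2 <;> push_cast <;> ring_nf
    · convert qBin_natCast_add (i + 1) m using 2 <;> push_cast <;> ring_nf
  · rw [add_sub_cancel_right, sub_self, qBin_self hx (by omega), qBin_self hx (by omega),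
      qBin_eq_zero (by omega)]
    simp
  · rw [qBin_eq_zero (by omega), qBin_eq_zero (by omega), qBin_eq_zero (by omega)]
    simp

lemma qBin_succ' (hx : ∀ m, qPoch x m ≠ 0) (n : ℕ) (k : ℤ) :
    qBin x ((n : ℤ) + 1) k = qBin x n (k - 1) + x ^ k * qBin x n k := by
  rw [qBin_symm, qBin_succ hx, qBin_symm n (k - 1), qBin_symm n k]
  ring_nf

/-- The `q`-Vandermonde identity. -/
theorem qBin_add_eq_sum (hx0 : x ≠ 0) (hx : ∀ m, qPoch x m ≠ 0) {m R : ℕ} (hmR : m ≤ R)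
    (n : ℕ) (p : ℤ) :
    qBin x ((m : ℤ) + n) p =
      ∑ j ∈ range (R + 1), x ^ ((j : ℤ) * (n - p + j)) * qBin x m j * qBin x n (p - j) := by
  induction n generalizing p with
  | zero =>
    simp only [Nat.cast_zero, add_zero, qBin_zero_left hx, mul_ite, mul_one, mul_zero]
    by_cases hp : 0 ≤ p ∧ p ≤ m
    · rw [sum_eq_single_of_mem p.toNat (mem_range.2 (by omega)) fun j _ hj => if_neg (by omega),
        if_pos (by omega), Int.toNat_of_nonneg hp.1, zero_sub, neg_add_cancel, mul_zero,
        zpow_zero, one_mul]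
    · refine (qBin_eq_zero hp).trans (sum_eq_zero fun j _ => ?_).symm
      split_ifs
      · rw [qBin_eq_zero (by omega), mul_zero]
      · rfl
  | succ n ih =>
    rw [Nat.cast_succ, ← add_assoc, ← Nat.cast_add, qBin_succ' hx, Nat.cast_add, ih, ih,
      mul_sum, ← sum_add_distrib]
    refine sum_congr rfl fun j _ => ?_
    have hexp : x ^ ((j : ℤ) * (n + 1 - p + j)) * x ^ (p - j) =
        x ^ p * x ^ ((j : ℤ) * (n - p + j)) := by
      rw [← zpow_add₀ hx0, ← zpow_add₀ hx0]
      ring_nf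
    rw [qBin_succ' hx n (p - j), show (j : ℤ) * (n - (p - 1) + j) = j * (n + 1 - p + j) by ring,
      sub_right_comm]
    linear_combination (-qBin x m j * qBin x n (p - j)) * hexp

lemma qBin_two_mul_sub_eq_sum (hx0 : x ≠ 0) (hx : ∀ m, qPoch x m ≠ 0) {k R : ℕ} (hkR : k ≤ R)
    (a : ℤ) :
    qBin x (2 * k) (k - a) =
      ∑ j ∈ range (R + 1), x ^ ((j : ℤ) * (j + a)) * qBin x k j * qBin x k (j + a) := by
  rw [two_mul, qBin_add_eq_sum hx0 hx hkR]
  refine sum_congr rfl fun j _ => ?_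
  rw [qBin_symm k (k - a - j)]
  ring_nf

lemma qBin_mul_qBin_eq_div (hx : ∀ m, qPoch x m ≠ 0) {n k m : ℤ} (hm : 0 ≤ m) (hmk : m ≤ k)
    (hkn : k ≤ n) :
    qBin x n k * qBin x k m =
      qPoch x n.toNat / (qPoch x (n - k).toNat * qPoch x (k - m).toNat * qPoch x m.toNat) := by
  rw [qBin, qBin, if_pos ⟨by omega, hkn⟩, if_pos ⟨hm, hmk⟩]
  have := hx k.toNat
  field_simp

lemma qBin_mul_qBin (hx : ∀ m, qPoch x m ≠ 0) (n k m : ℤ) :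
    qBin x n k * qBin x k m = qBin x n m * qBin x (n - m) (k - m) := by
  by_cases h : 0 ≤ m ∧ m ≤ k ∧ k ≤ n
  · rw [qBin_mul_qBin_eq_div hx h.1 h.2.1 h.2.2, qBin_symm n m,
      qBin_mul_qBin_eq_div hx (by omega) (by omega) (by omega), sub_sub_cancel,
      show n - m - (k - m) = n - k by ring]
    ring
  · have hl : qBin x n k * qBin x k m = 0 := by
      by_cases hk : 0 ≤ k ∧ k ≤ n
      · rw [qBin_eq_zero (show ¬(0 ≤ m ∧ m ≤ k) by omega), mul_zero]
      · rw [qBin_eq_zero hk, zero_mul]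
    have hr : qBin x n m * qBin x (n - m) (k - m) = 0 := by
      by_cases hm : 0 ≤ m ∧ m ≤ n
      · rw [qBin_eq_zero (show ¬(0 ≤ k - m ∧ k - m ≤ n - m) by omega), mul_zero]
      · rw [qBin_eq_zero hm, zero_mul]
    rw [hl, hr]

/-- A `q`-analogue of `∑ₜ (-1)ᵗ C(M, t) C(L - t, i) = C(L - M, i - M)`. -/
theorem sum_range_alternating_qBin_mul_qBin (hx0 : x ≠ 0) (hx : ∀ m, qPoch x m ≠ 0) {M R : ℕ}
    (hMR : M ≤ R) {L : ℤ} (hML : M ≤ L) (i : ℤ) :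
    ∑ t ∈ range (R + 1), (-1) ^ t * x ^ t.choose 2 * qBin x M t * qBin x (L - t) i =
      x ^ ((M : ℤ) * (L - i)) * qBin x (L - M) (i - M) := by
  induction M generalizing R L with
  | zero =>
    simp only [Nat.cast_zero, qBin_zero_left hx, mul_ite, mul_one, mul_zero, ite_mul, zero_mul,
      Nat.cast_eq_zero, sub_zero, zpow_zero, one_mul]
    rw [sum_ite_eq' _ _ _, if_pos (mem_range.2 (by omega))]
    simp
  | succ M ih =>
    obtain ⟨R, rfl⟩ : ∃ R', R = R' + 1 := ⟨R - 1, by omega⟩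
    have shifted : ∑ t ∈ range (R + 1 + 1), (-1) ^ t * x ^ t.choose 2 *
          (x ^ ((M : ℤ) + 1 - t) * qBin x M (t - 1)) * qBin x (L - t) i =
        -x ^ M * ∑ t ∈ range (R + 1),
          (-1) ^ t * x ^ t.choose 2 * qBin x M t * qBin x (L - 1 - t) i := by
      rw [sum_range_succ', mul_sum, Nat.cast_zero, zero_sub, qBin_eq_zero (by omega)]
      simp only [mul_zero, zero_mul, add_zero]
      refine sum_congr rfl fun t _ => ?_
      have hexp : x ^ (t + 1).choose 2 * x ^ ((M : ℤ) + 1 - (t + 1 : ℕ)) =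
          x ^ M * x ^ t.choose 2 := by
        rw [Nat.choose_succ_succ, Nat.choose_one_right, ← zpow_natCast, ← zpow_natCast x M,
          ← zpow_natCast x (t.choose 2), ← zpow_add₀ hx0, ← zpow_add₀ hx0]
        push_cast
        ring_nf
      rw [show ((t + 1 : ℕ) : ℤ) - 1 = t by push_cast; ring,
        show L - ((t + 1 : ℕ) : ℤ) = L - 1 - t by push_cast; ring]
      linear_combination (-1) ^ (t + 1) * qBin x M t * qBin x (L - 1 - t) i * hexp
    obtain ⟨n, hn⟩ : ∃ n : ℕ, (n : ℤ) = L - 1 - M := ⟨(L - 1 - M).toNat, by omega⟩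
    have pascal := qBin_succ hx n (i - M)
    rw [hn, show L - 1 - M + 1 = L - M by ring, show L - M - (i - M) = L - i by ring] at pascal
    have z1 : x ^ ((M : ℤ) * (L - i)) * x ^ (L - i) = x ^ (((M + 1 : ℕ) : ℤ) * (L - i)) := by
      rw [← zpow_add₀ hx0]
      push_cast
      ring_nf
    have z2 : x ^ M * x ^ ((M : ℤ) * (L - 1 - i)) = x ^ ((M : ℤ) * (L - i)) := by
      rw [← zpow_natCast, ← zpow_add₀ hx0]
      ring_nf
    calc _ = ∑ t ∈ range (R + 1 + 1), (-1) ^ t * x ^ t.choose 2 *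
            (x ^ ((M : ℤ) + 1 - t) * qBin x M (t - 1)) * qBin x (L - t) i +
          ∑ t ∈ range (R + 1 + 1), (-1) ^ t * x ^ t.choose 2 * qBin x M t * qBin x (L - t) i := by
          rw [← sum_add_distrib]
          refine sum_congr rfl fun t _ => ?_
          rw [Nat.cast_succ, qBin_succ hx]
          ring
      _ = -x ^ M * (x ^ ((M : ℤ) * (L - 1 - i)) * qBin x (L - 1 - M) (i - M)) +
          x ^ ((M : ℤ) * (L - i)) * qBin x (L - M) (i - M) := by
          rw [shifted, ih (by omega) (by push_cast at hML; omega),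
            ih (by omega) (by push_cast at hML; omega)]
      _ = _ := by
          rw [pascal, show L - ((M + 1 : ℕ) : ℤ) = L - 1 - M by push_cast; ring,
            show i - ((M + 1 : ℕ) : ℤ) = i - M - 1 by push_cast; ring]
          linear_combination
            qBin x (L - 1 - M) (i - M - 1) * z1 - qBin x (L - 1 - M) (i - M) * z2

theorem sum_range_alternating_qBin_mul_qBin_mul_qBin (hx0 : x ≠ 0) (hx : ∀ m, qPoch x m ≠ 0)
    (L j : ℕ) (b : ℤ) :
    ∑ k ∈ range (L + 1),
        (-1) ^ (L - k) * x ^ (L - k).choose 2 * qBin x L k * qBin x k j * qBin x k b =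
      x ^ ((L - b) * (L - j)) * (qBin x L b * qBin x b (j + b - L)) := by
  calc _ = qBin x L b * ∑ k ∈ range (L + 1),
          (-1) ^ (L - k) * x ^ (L - k).choose 2 * qBin x (L - b) (k - b) * qBin x k j := by
        rw [mul_sum]
        refine sum_congr rfl fun k _ => ?_
        linear_combination
          (-1) ^ (L - k) * x ^ (L - k).choose 2 * qBin x k j * qBin_mul_qBin hx L k b
    _ = _ := by
        by_cases hb : 0 ≤ b ∧ b ≤ L
        · obtain ⟨M, hM⟩ : ∃ M : ℕ, (M : ℤ) = L - b := ⟨(L - b).toNat, by omega⟩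
          have reflected : ∑ k ∈ range (L + 1),
                (-1) ^ (L - k) * x ^ (L - k).choose 2 * qBin x (L - b) (k - b) * qBin x k j =
              ∑ t ∈ range (L + 1), (-1) ^ t * x ^ t.choose 2 * qBin x M t * qBin x (L - t) j := by
            rw [← sum_range_reflect]
            refine sum_congr rfl fun t ht => ?_
            have ht : t ≤ L := Nat.lt_succ_iff.1 (mem_range.1 ht)
            rw [Nat.add_sub_cancel, Nat.sub_sub_self ht, Nat.cast_sub ht, qBin_symm (M : ℤ) t, hM,
              sub_right_comm]
          rw [reflected, sum_range_alternating_qBin_mul_qBin hx0 hx (R := L) (M := M) (by omega)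
              (L := L) (by omega), hM, show (L : ℤ) - (L - b) = b by ring,
            show (j : ℤ) - (L - b) = j + b - L by ring]
          ring
        · rw [qBin_eq_zero hb]
          simp

end QBinomial

section Trinomial

variable {s : RatFunc ℚ}

lemma qT_zero_eq_sum_qBin_mul_qBin (hx : ∀ m, qPoch (s ^ 2) m ≠ 0) (L : ℕ) (a : ℤ) :
    qT s 0 L a = ∑ j ∈ range (L + 1), s ^ ((2 * j + a - L) ^ 2) *
      (qBin (s ^ 2) L (j + a) * qBin (s ^ 2) (j + a) (2 * j + a - L)) := by
  have vanish : ∀ j ∈ range (L + 1), s ^ ((2 * j + a - L) ^ 2) *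
      (qBin (s ^ 2) L (j + a) * qBin (s ^ 2) (j + a) (2 * j + a - L)) ≠ 0 →
        (L : ℤ) ≤ 2 * j + a ∧ (j : ℤ) + a ≤ L := by
    intro j _ hne
    by_contra h
    refine hne ?_
    rcases not_and_or.1 h with h | h
    · rw [qBin_eq_zero (show ¬(0 ≤ 2 * (j : ℤ) + a - L ∧ _) by omega), mul_zero, mul_zero]
    · rw [qBin_eq_zero (show ¬(_ ∧ (j : ℤ) + a ≤ L) by omega), zero_mul, mul_zero]
  rw [qT, ← sum_filter, ← sum_filter_of_ne vanish]
  symm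
  have habs := abs_cases a
  refine sum_bij' (fun j _ => (2 * (j : ℤ) + a - L).toNat)
    (fun r _ => (((L : ℤ) - a + r) / 2).toNat) ?_ ?_ ?_ ?_ ?_
  · intro j hj
    simp only [mem_filter, mem_range, Int.even_iff] at hj ⊢
    omega
  · intro r hr
    simp only [mem_filter, mem_range, Int.even_iff] at hr ⊢
    omega
  · intro j hj
    simp only [mem_filter, mem_range] at hj
    omega
  · intro r hr
    simp only [mem_filter, mem_range, Int.even_iff] at hr
    omega
  · intro j hj
    simp only [mem_filter, mem_range] at hj
    obtain ⟨r, hr⟩ : ∃ r : ℕ, (r : ℤ) = 2 * j + a - L := ⟨(2 * (j : ℤ) + a - L).toNat, by omega⟩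
    rw [show (2 * (j : ℤ) + a - L).toNat = r by omega, ← hr,
      qBin_mul_qBin_eq_div hx (by omega) (by omega) (by omega), Int.toNat_natCast,
      Int.toNat_natCast, show ((L : ℤ) - (j + a)).toNat = (((L : ℤ) - a - r) / 2).toNat by omega,
      show ((j : ℤ) + a - r).toNat = (((L : ℤ) + a - r) / 2).toNat by omega, sub_zero, ← sq]
    ring

theorem qT_zero_eq_alternating_sum (hs : s ≠ 0) (hx : ∀ m, qPoch (s ^ 2) m ≠ 0) (L : ℕ)
    (a : ℤ) :
    qT s 0 L a =
      ∑ k ∈ range (L + 1), (-1 : RatFunc ℚ) ^ (L - k) *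
        s ^ (((L : ℤ) - k) * ((L : ℤ) - k - 1) + a ^ 2 - (L : ℤ) ^ 2) *
        qBin (s ^ 2) L k * qBin (s ^ 2) (2 * (k : ℤ)) (k - a) := by
  have hx0 : s ^ 2 ≠ 0 := pow_ne_zero 2 hs
  have vandermonde : ∀ k ∈ range (L + 1), (-1 : RatFunc ℚ) ^ (L - k) *
        s ^ (((L : ℤ) - k) * ((L : ℤ) - k - 1) + a ^ 2 - (L : ℤ) ^ 2) *
        qBin (s ^ 2) L k * qBin (s ^ 2) (2 * (k : ℤ)) (k - a) =
      ∑ j ∈ range (L + 1), s ^ (a ^ 2 - (L : ℤ) ^ 2) * (s ^ 2) ^ ((j : ℤ) * (j + a)) *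
        ((-1) ^ (L - k) * (s ^ 2) ^ (L - k).choose 2 * qBin (s ^ 2) L k * qBin (s ^ 2) k j *
          qBin (s ^ 2) k (j + a)) := by
    intro k hk
    have hkL : k ≤ L := Nat.lt_succ_iff.1 (mem_range.1 hk)
    rw [qBin_two_mul_sub_eq_sum hx0 hx hkL, mul_sum, ← zpow_mul_sub_one_eq_pow_choose_two,
      Nat.cast_sub hkL, add_sub_assoc, zpow_add₀ hs]
    exact sum_congr rfl fun j _ => by ring
  have hexp : ∀ j : ℕ, s ^ ((2 * j + a - L) ^ 2) = s ^ (a ^ 2 - (L : ℤ) ^ 2) *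
      (s ^ 2) ^ ((j : ℤ) * (j + a)) * (s ^ 2) ^ ((L - (j + a)) * (L - (j : ℤ))) := by
    intro j
    simp only [← zpow_natCast, ← zpow_mul, ← zpow_add₀ hs]
    ring_nf
  calc qT s 0 L a = ∑ j ∈ range (L + 1),
        s ^ (a ^ 2 - (L : ℤ) ^ 2) * (s ^ 2) ^ ((j : ℤ) * (j + a)) *
          ((s ^ 2) ^ ((L - (j + a)) * (L - (j : ℤ))) *
            (qBin (s ^ 2) L (j + a) * qBin (s ^ 2) (j + a) (j + (j + a) - L))) := by
        rw [qT_zero_eq_sum_qBin_mul_qBin hx]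
        refine sum_congr rfl fun j _ => ?_
        rw [hexp, show (j : ℤ) + (j + a) - L = 2 * j + a - L by ring]
        ring
    _ = _ := by
        simp_rw [← sum_range_alternating_qBin_mul_qBin_mul_qBin hx0 hx, sum_congr rfl vandermonde,
          mul_sum]
        exact sum_comm

end Trinomial

lemma qPoch_qq_sq_ne_zero (n : ℕ) : qPoch (qq ^ 2) n ≠ 0 := by
  refine prod_ne_zero_iff.2 fun j _ => ?_
  rw [qq, ← pow_mul, sub_ne_zero, ne_comm, ← RatFunc.algebraMap_X, ← map_pow,
    ← map_one (algebraMap (Polynomial ℚ) (RatFunc ℚ)), Ne, (RatFunc.algebraMap_injective ℚ).eq_iff]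
  intro h
  simpa using congrArg Polynomial.natDegree h

theorem stmt4_general (L : ℕ) (a : ℤ) :
    qT qq 0 L a =
      ∑ k ∈ Finset.range (L + 1),
        (-1 : RatFunc ℚ) ^ (L - k) *
          qq ^ (((L : ℤ) - k) * ((L : ℤ) - k - 1) + a ^ 2 - (L : ℤ) ^ 2) *
          qBin (qq ^ 2) (L : ℤ) (k : ℤ) * qBin (qq ^ 2) (2 * (k : ℤ)) ((k : ℤ) - a) :=
  qT_zero_eq_alternating_sum RatFunc.X_ne_zero qPoch_qq_sq_ne_zero L a

theorem stmt4 (L : ℕ) (a : ℤ) (h : |a| ≤ (L : ℤ)) :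
    qT qq 0 L a =
      ∑ k ∈ Finset.range (L + 1),
        (-1 : RatFunc ℚ) ^ (L - k) *
          qq ^ (((L : ℤ) - k) * ((L : ℤ) - k - 1) + a ^ 2 - (L : ℤ) ^ 2) *
          qBin (qq ^ 2) (L : ℤ) (k : ℤ) * qBin (qq ^ 2) (2 * (k : ℤ)) ((k : ℤ) - a) :=
  stmt4_general L a
end

section
/- For all integers L ≥ 0 and all integers a, T_n(L, 2a) = ∑_{k≥0} q^{(L−2k)(L−2k−n)/2} [L choose 2k]_q [2k choose k−a]_q. -/
open Finset

lemma ratfunc_X_pow_ne_one (m : ℕ) (hm : m ≠ 0) : (RatFunc.X : RatFunc ℚ) ^ m ≠ 1 := by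
  intro h
  have h2 : (algebraMap (Polynomial ℚ) (RatFunc ℚ)) (Polynomial.X ^ m) =
      (algebraMap (Polynomial ℚ) (RatFunc ℚ)) 1 := by
    rw [map_pow, map_one, RatFunc.algebraMap_X, h]
  have h3 : (Polynomial.X : Polynomial ℚ) ^ m = 1 := RatFunc.algebraMap_injective ℚ h2
  have h4 := congrArg Polynomial.natDegree h3
  simp [Polynomial.natDegree_X_pow] at h4
  exact hm h4

lemma qPochSq_ne_zero (m : ℕ) : qPoch (qq ^ 2) m ≠ 0 := by
  unfold qPoch
  rw [Finset.prod_ne_zero_iff]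
  intro j _
  rw [sub_ne_zero]
  intro h
  have h2 : (RatFunc.X : RatFunc ℚ) ^ (2 * (j + 1)) = 1 := by
    rw [pow_mul]
    exact h.symm
  exact ratfunc_X_pow_ne_one _ (by omega) h2

theorem stmt9 (n : ℤ) (L : ℕ) (a : ℤ) :
    qT qq n L (2 * a) =
      ∑ k ∈ Finset.range (L + 1),
        qq ^ (((L : ℤ) - 2 * k) * ((L : ℤ) - 2 * k - n)) *
          qBin (qq ^ 2) (L : ℤ) (2 * (k : ℤ)) * qBin (qq ^ 2) (2 * (k : ℤ)) ((k : ℤ) - a) := by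
  classical
  rw [qT, ← Finset.sum_filter]
  rw [← Finset.sum_filter_of_ne
    (p := fun k : ℕ => 2 * k ≤ L ∧ |a| ≤ (k : ℤ)) (s := Finset.range (L + 1))
    (f := fun k : ℕ => qq ^ (((L : ℤ) - 2 * k) * ((L : ℤ) - 2 * k - n)) *
      qBin (qq ^ 2) (L : ℤ) (2 * (k : ℤ)) * qBin (qq ^ 2) (2 * (k : ℤ)) ((k : ℤ) - a))
    ?side]
  case side =>
    intro k _ hne
    by_contra hp
    push_neg at hp
    rcases le_or_gt (2 * k) L with h2k | h2k
    · -- then ¬ |a| ≤ k, so second qBin is zero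
      have hak := hp h2k
      have : qBin (qq ^ 2) (2 * (k : ℤ)) ((k : ℤ) - a) = 0 := by
        rw [qBin, if_neg]
        rintro ⟨h1, h2⟩
        rcases abs_cases a with ⟨h, _⟩ | ⟨h, _⟩ <;> omega
      simp [this] at hne
    · have : qBin (qq ^ 2) (L : ℤ) (2 * (k : ℤ)) = 0 := by
        rw [qBin, if_neg]
        rintro ⟨h1, h2⟩
        omega
      simp [this] at hne
  symm
  refine Finset.sum_nbij' (fun k => L - 2 * k) (fun r => (L - r) / 2) ?_ ?_ ?_ ?_ ?_
  · intro k hk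
    simp only [Finset.mem_filter, Finset.mem_range] at hk ⊢
    obtain ⟨hkL, h2k, hka⟩ := hk
    rw [abs_le] at hka
    have habs2 : |2 * a| = 2 * |a| := by rw [abs_mul]; norm_num
    refine ⟨by omega, ?_, ?_⟩
    · rw [Int.even_iff]; omega
    · rw [habs2]
      rcases abs_cases a with ⟨h, _⟩ | ⟨h, _⟩ <;> omega
  · intro r hr
    simp only [Finset.mem_filter, Finset.mem_range] at hr ⊢
    obtain ⟨hrL, hev, hle⟩ := hr
    rw [Int.even_iff] at hev
    have habs2 : |2 * a| = 2 * |a| := by rw [abs_mul]; norm_num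
    rw [habs2] at hle
    refine ⟨by omega, by omega, ?_⟩
    rcases abs_cases a with ⟨h, _⟩ | ⟨h, _⟩ <;> omega
  · intro k hk
    simp only [Finset.mem_filter, Finset.mem_range] at hk
    show (L - (L - 2 * k)) / 2 = k
    omega
  · intro r hr
    simp only [Finset.mem_filter, Finset.mem_range] at hr
    obtain ⟨hrL, hev, _⟩ := hr
    rw [Int.even_iff] at hev
    show L - 2 * ((L - r) / 2) = r
    omega
  · intro k hk
    simp only [Finset.mem_filter, Finset.mem_range] at hk
    obtain ⟨hkL, h2k, hka⟩ := hk
    rw [abs_le] at hka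
    have hc : ((L - 2 * k : ℕ) : ℤ) = (L : ℤ) - 2 * k := by omega
    rw [hc]
    have h1 : (((L : ℤ) - 2 * a - ((L : ℤ) - 2 * k)) / 2).toNat = ((k : ℤ) - a).toNat := by
      omega
    have h2 : (((L : ℤ) + 2 * a - ((L : ℤ) - 2 * k)) / 2).toNat = ((k : ℤ) + a).toNat := by
      omega
    rw [h1, h2]
    rw [qBin, qBin, if_pos ⟨by omega, by omega⟩, if_pos ⟨by omega, by omega⟩]
    have h3 : ((L : ℤ)).toNat = L := by omega
    have h4 : (2 * (k : ℤ)).toNat = 2 * k := by omega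
    have h5 : ((L : ℤ) - 2 * (k : ℤ)).toNat = L - 2 * k := by omega
    have h6 : (2 * (k : ℤ) - ((k : ℤ) - a)).toNat = ((k : ℤ) + a).toNat := by omega
    rw [h3, h4, h5, h6]
    have P1 := qPochSq_ne_zero L
    have P2 := qPochSq_ne_zero (2 * k)
    have P3 := qPochSq_ne_zero (L - 2 * k)
    have P4 := qPochSq_ne_zero ((k : ℤ) - a).toNat
    have P5 := qPochSq_ne_zero ((k : ℤ) + a).toNat
    field_simp
end

section
/- For all integers L ≥ 0, all integers a and b, the q-trinomial satisfies [L, b; 2a]_2 = ∑_{k≥0} q^{(k−a)(k−a+b)} [L choose 2k]_q [2k choose k−a]_q. -/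
open Finset

lemma qBin_ne_zero_cond {n k : ℤ} (h : qBin qq n k ≠ 0) : 0 ≤ k ∧ k ≤ n := by
  by_contra hc
  exact h (if_neg hc)

lemma qBin_mul (n m p : ℤ) :
    qBin qq n m * qBin qq (n - m) p = qBin qq n (m + p) * qBin qq (m + p) m := by
  by_cases hc : 0 ≤ m ∧ 0 ≤ p ∧ m + p ≤ n
  · obtain ⟨h1, h2, h3⟩ := hc
    rw [qBin, qBin, qBin, qBin, if_pos (by omega), if_pos (by omega), if_pos (by omega),
      if_pos (by omega)]
    have e1 : (n - m - p).toNat = (n - (m + p)).toNat := by omega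
    have e2 : (m + p - m).toNat = p.toNat := by omega
    rw [e1, e2]
    have h4 := qPoch_ne_zero n.toNat
    have h5 := qPoch_ne_zero m.toNat
    have h6 := qPoch_ne_zero p.toNat
    have h7 := qPoch_ne_zero (n - m).toNat
    have h8 := qPoch_ne_zero (n - (m + p)).toNat
    have h9 := qPoch_ne_zero (m + p).toNat
    field_simp
  · rw [qBin, qBin, qBin, qBin]
    rcases (by omega : m < 0 ∨ p < 0 ∨ n < m + p) with h | h | h
    · rw [if_neg (by omega : ¬(0 ≤ m ∧ m ≤ n)), zero_mul,
        if_neg (by omega : ¬(0 ≤ m ∧ m ≤ m + p)), mul_zero]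
    · rw [if_neg (by omega : ¬(0 ≤ p ∧ p ≤ n - m)), mul_zero,
        if_neg (by omega : ¬(0 ≤ m ∧ m ≤ m + p)), mul_zero]
    · rw [if_neg (by omega : ¬(0 ≤ p ∧ p ≤ n - m)), mul_zero,
        if_neg (by omega : ¬(0 ≤ m + p ∧ m + p ≤ n)), zero_mul]

lemma sum_range_eq_sum_Icc (L : ℕ) (F : ℤ → RatFunc ℚ) :
    ∑ j ∈ Finset.range (L+1), F (j : ℤ) = ∑ j ∈ Finset.Icc (0:ℤ) L, F j := by
  refine Finset.sum_nbij' (fun i : ℕ => (i : ℤ)) (fun j : ℤ => j.toNat) ?_ ?_ ?_ ?_ ?_ <;>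
    simp +contextual [Finset.mem_range, Finset.mem_Icc] <;> omega

theorem stmt10 (L : ℕ) (a b : ℤ) :
    qTri qq L b (2 * a) =
      ∑ k ∈ Finset.range (L + 1),
        qq ^ (((k : ℤ) - a) * ((k : ℤ) - a + b)) *
          qBin qq (L : ℤ) (2 * (k : ℤ)) * qBin qq (2 * (k : ℤ)) ((k : ℤ) - a) := by
  set F : ℤ → RatFunc ℚ := fun j =>
    qq ^ (j * (j + b)) * qBin qq (L : ℤ) (2 * (j + a)) * qBin qq (2 * (j + a)) j with hF
  have hsupp : ∀ j : ℤ, F j ≠ 0 → (0 ≤ j ∧ j ≤ L ∧ -a ≤ j ∧ j ≤ (L : ℤ) - a) := by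
    intro j hj
    rw [hF] at hj
    have h1 : qBin qq (L : ℤ) (2 * (j + a)) ≠ 0 := fun h => hj (by simp [h])
    have h2 : qBin qq (2 * (j + a)) j ≠ 0 := fun h => hj (by simp [h])
    have c1 := qBin_ne_zero_cond h1
    have c2 := qBin_ne_zero_cond h2
    omega
  have hL : qTri qq L b (2 * a) = ∑ j ∈ Finset.Icc (0:ℤ) L, F j := by
    rw [qTri, ← sum_range_eq_sum_Icc]
    refine Finset.sum_congr rfl fun j _ => ?_
    have e1 : (2 : ℤ) * ((j : ℤ) + a) = (j : ℤ) + ((j : ℤ) + 2 * a) := by ring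
    rw [hF]
    simp only [e1]
    rw [mul_assoc, mul_assoc, qBin_mul (L : ℤ) (j : ℤ) ((j : ℤ) + 2 * a)]
  have hR : (∑ k ∈ Finset.range (L + 1),
        qq ^ (((k : ℤ) - a) * ((k : ℤ) - a + b)) *
          qBin qq (L : ℤ) (2 * (k : ℤ)) * qBin qq (2 * (k : ℤ)) ((k : ℤ) - a)) =
      ∑ j ∈ Finset.Icc (-a) ((L : ℤ) - a), F j := by
    rw [show Finset.Icc (-a) ((L : ℤ) - a) =
        Finset.map (addRightEmbedding (-a)) (Finset.Icc (0:ℤ) L) by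
      rw [Finset.map_add_right_Icc]; congr 1 <;> ring]
    rw [Finset.sum_map, ← sum_range_eq_sum_Icc]
    refine Finset.sum_congr rfl fun k _ => ?_
    rw [hF]
    simp only [addRightEmbedding_apply]
    have e1 : (k : ℤ) + -a = (k : ℤ) - a := by ring
    have e2 : (2 : ℤ) * ((k : ℤ) - a + a) = 2 * (k : ℤ) := by ring
    rw [e1, e2]
  rw [hL, hR]
  have hsub1 : Finset.Icc (0:ℤ) L ⊆ Finset.Icc (-|a| - 1) ((L : ℤ) + |a| + 1) := by
    intro x hx
    simp only [Finset.mem_Icc] at *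
    have := abs_nonneg a
    omega
  have hsub2 : Finset.Icc (-a) ((L : ℤ) - a) ⊆ Finset.Icc (-|a| - 1) ((L : ℤ) + |a| + 1) := by
    intro x hx
    simp only [Finset.mem_Icc] at *
    have h1 := le_abs_self a
    have h2 := neg_abs_le a
    omega
  rw [Finset.sum_subset hsub1 ?_, Finset.sum_subset hsub2 ?_]
  · intro x _ hx
    simp only [Finset.mem_Icc, not_and_or, not_le] at hx
    by_contra h
    have := hsupp x h
    omega
  · intro x _ hx
    simp only [Finset.mem_Icc, not_and_or, not_le] at hx
    by_contra h
    have := hsupp x h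
    omega
end
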